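/- Let F be a non-abelian free group, Δ a decomposition of F, φ a Δ-decomposable quasimorphism, ω a bounded symmetric Δ-continuous 2-cocycle, and ζ(g,g',h) = Σ_{j=1}^k φ(g_j)·ω(g_{j+1}⋯g_k g', h) for Δ(g) = (g₁,…,g_k). Then there is a constant C > 0 such that for all u, v₁, v₂ ∈ F with v₁uv₂ reduced: (a) |ζ(u, u⁻¹v₁⁻¹, v₁uv₂) − ζ(u, u⁻¹, u)| ≤ C, and (b) |ζ(u⁻¹, v₁⁻¹, v₁uv₂) − ζ(u⁻¹, 1, u)| ≤ C. -/

import Mathlib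

/-! Common definitions: free groups, reduced products, (bounded) cochains,
decompositions of a free group, Brooks and Rolli quasimorphisms. -/

section Preamble

variable {α : Type} [DecidableEq α]

/-- Word length of an element of a free group (length of its reduced word). -/
def wlen (g : FreeGroup α) : ℕ := g.toWord.length

/-- A product `g = g₁ ⋯ g_k` is reduced (no cancellation) if the word lengths add up. -/
def ReducedProd (l : List (FreeGroup α)) : Prop :=
  wlen l.prod = (l.map wlen).sum

/-- Inhomogeneous coboundary `δ¹φ(g,h) = φ(g) + φ(h) − φ(gh)`. -/
def d1 (φ : FreeGroup α → ℝ) (g h : FreeGroup α) : ℝ := φ g + φ h - φ (g * h)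

/-- Inhomogeneous coboundary `δ²η`. -/
def d2 (η : FreeGroup α → FreeGroup α → ℝ) (g h i : FreeGroup α) : ℝ :=
  η h i - η (g * h) i + η g (h * i) - η g h

/-- Inhomogeneous coboundary `δ³β`. -/
def d3 (β : FreeGroup α → FreeGroup α → FreeGroup α → ℝ) (g h i j : FreeGroup α) : ℝ :=
  β h i j - β (g * h) i j + β g (h * i) j - β g h (i * j) + β g h i

/-- A quasimorphism on the free group. -/
def IsQuasimorphism (φ : FreeGroup α → ℝ) : Prop :=
  ∃ D > (0 : ℝ), ∀ g h : FreeGroup α, |d1 φ g h| < D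

/-- A symmetric map: `φ(g⁻¹) = −φ(g)`. -/
def IsSymmetricMap (φ : FreeGroup α → ℝ) : Prop :=
  ∀ g : FreeGroup α, φ g⁻¹ = -φ g

/-- Longest common initial sequence of two lists. -/
def commonPrefix {β : Type} [DecidableEq β] : List β → List β → List β
  | a :: as, b :: bs => if a = b then a :: commonPrefix as bs else []
  | _, _ => []

/-- Reversed, entrywise-inverted list: `(g₁, …, g_k) ↦ (g_k⁻¹, …, g₁⁻¹)`. -/
def seqInv (l : List (FreeGroup α)) : List (FreeGroup α) :=
  (l.map fun x => x⁻¹).reverse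

/-- `(c̲₁⁻¹)`: the common initial sequence of `Δ(g)` and `Δ(gh)`. -/
def cSeq1 (D : FreeGroup α → List (FreeGroup α)) (g h : FreeGroup α) : List (FreeGroup α) :=
  commonPrefix (D g) (D (g * h))

/-- `(c̲₂⁻¹)`: the common initial sequence of `Δ(g⁻¹)` and `Δ(h)`. -/
def cSeq2 (D : FreeGroup α → List (FreeGroup α)) (g h : FreeGroup α) : List (FreeGroup α) :=
  commonPrefix (D g⁻¹) (D h)

/-- `(c̲₃⁻¹)`: the common initial sequence of `Δ(h⁻¹)` and `Δ(h⁻¹g⁻¹)`. -/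
def cSeq3 (D : FreeGroup α → List (FreeGroup α)) (g h : FreeGroup α) : List (FreeGroup α) :=
  commonPrefix (D h⁻¹) (D (h⁻¹ * g⁻¹))

/-- `(r̲₁)`: middle part of `Δ(g) = (c̲₁⁻¹)·(r̲₁)·(c̲₂)`. -/
def rSeq1 (D : FreeGroup α → List (FreeGroup α)) (g h : FreeGroup α) : List (FreeGroup α) :=
  ((D g).drop (cSeq1 D g h).length).take
    ((D g).length - (cSeq1 D g h).length - (cSeq2 D g h).length)

/-- `(r̲₂)`: middle part of `Δ(h) = (c̲₂⁻¹)·(r̲₂)·(c̲₃)`. -/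
def rSeq2 (D : FreeGroup α → List (FreeGroup α)) (g h : FreeGroup α) : List (FreeGroup α) :=
  ((D h).drop (cSeq2 D g h).length).take
    ((D h).length - (cSeq2 D g h).length - (cSeq3 D g h).length)

/-- `(r̲₃)`: middle part of `Δ(h⁻¹g⁻¹) = (c̲₃⁻¹)·(r̲₃)·(c̲₁)`. -/
def rSeq3 (D : FreeGroup α → List (FreeGroup α)) (g h : FreeGroup α) : List (FreeGroup α) :=
  ((D (h⁻¹ * g⁻¹)).drop (cSeq3 D g h).length).take
    ((D (h⁻¹ * g⁻¹)).length - (cSeq3 D g h).length - (cSeq1 D g h).length)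

/-- A decomposition `Δ` of the free group `F` into pieces `P` (Definition 3.1). -/
structure Decomp (α : Type) [DecidableEq α] where
  /-- the set of pieces -/
  pieces : Set (FreeGroup α)
  /-- the decomposition map `Δ` -/
  D : FreeGroup α → List (FreeGroup α)
  /-- the uniform bound `R` on the r-parts of `Δ`-triangles -/
  R : ℕ
  R_pos : 0 < R
  pieces_symm : ∀ p ∈ pieces, p⁻¹ ∈ pieces
  one_notin_pieces : (1 : FreeGroup α) ∉ pieces
  mem_pieces : ∀ g : FreeGroup α, ∀ p ∈ D g, p ∈ pieces
  prod_eq : ∀ g : FreeGroup α, (D g).prod = g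
  reduced : ∀ g : FreeGroup α, ReducedProd (D g)
  inv_eq : ∀ g : FreeGroup α, D g⁻¹ = seqInv (D g)
  infix_closed : ∀ (g : FreeGroup α) (l₁ l₂ l₃ : List (FreeGroup α)),
    D g = l₁ ++ l₂ ++ l₃ → D l₂.prod = l₂
  triangle₁ : ∀ g h : FreeGroup α, D g = cSeq1 D g h ++ rSeq1 D g h ++ seqInv (cSeq2 D g h)
  triangle₂ : ∀ g h : FreeGroup α, D h = cSeq2 D g h ++ rSeq2 D g h ++ seqInv (cSeq3 D g h)
  triangle₃ : ∀ g h : FreeGroup α,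
    D (h⁻¹ * g⁻¹) = cSeq3 D g h ++ rSeq3 D g h ++ seqInv (cSeq1 D g h)
  rBound₁ : ∀ g h : FreeGroup α, (rSeq1 D g h).length ≤ R
  rBound₂ : ∀ g h : FreeGroup α, (rSeq2 D g h).length ≤ R
  rBound₃ : ∀ g h : FreeGroup α, (rSeq3 D g h).length ≤ R

/-- The `Δ`-decomposable map `φ_{λ,Δ}(g) = Σ_j λ(g_j)`. -/
def decQM (D : FreeGroup α → List (FreeGroup α)) (lam : FreeGroup α → ℝ)
    (g : FreeGroup α) : ℝ :=
  ((D g).map lam).sum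

/-- `φ` is a `Δ`-decomposable quasimorphism (Definition 3.8). -/
def IsDecomposable (dec : Decomp α) (φ : FreeGroup α → ℝ) : Prop :=
  ∃ lam : FreeGroup α → ℝ,
    (∃ B : ℝ, ∀ p ∈ dec.pieces, |lam p| ≤ B) ∧
    (∀ p ∈ dec.pieces, lam p⁻¹ = -lam p) ∧
    φ = decQM dec.D lam

/-- Agreement (as an extended natural number) of two sequences:
`⊤` if they are equal, otherwise the length of their common initial sequence. -/
def seqAgree {β : Type} [DecidableEq β] (l l' : List β) : ℕ∞ :=
  if l = l' then ⊤ else ((commonPrefix l l').length : ℕ∞)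

/-- The quantity `N_Δ((g,h),(g',h'))` measuring how much the `Δ`-triangles of the two
pairs agree around their centres. -/
noncomputable def NDelta (D : FreeGroup α → List (FreeGroup α))
    (p q : FreeGroup α × FreeGroup α) : ℕ∞ :=
  if p = q then ⊤
  else if rSeq1 D p.1 p.2 = rSeq1 D q.1 q.2 ∧ rSeq2 D p.1 p.2 = rSeq2 D q.1 q.2 ∧
            rSeq3 D p.1 p.2 = rSeq3 D q.1 q.2 then
    min (seqAgree (seqInv (cSeq1 D p.1 p.2)) (seqInv (cSeq1 D q.1 q.2)))
      (min (seqAgree (seqInv (cSeq2 D p.1 p.2)) (seqInv (cSeq2 D q.1 q.2)))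
        (seqAgree (seqInv (cSeq3 D p.1 p.2)) (seqInv (cSeq3 D q.1 q.2))))
  else 0

/-- A bounded symmetric `2`-cocycle `ω` is `Δ`-continuous (Definition 3.12). -/
def DeltaContinuousCocycle (D : FreeGroup α → List (FreeGroup α))
    (ω : FreeGroup α → FreeGroup α → ℝ) : Prop :=
  ∃ s : ℕ → ℝ, (∀ j, 0 ≤ s j) ∧ Summable s ∧
    ∀ p q : FreeGroup α × FreeGroup α, p ≠ q → ∀ N : ℕ, NDelta D p q = (N : ℕ∞) →
      |ω p.1 p.2 - ω q.1 q.2| ≤ s N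

/-- A quasimorphism `ψ` is `Δ`-continuous: it is symmetric and `δ¹ψ` is `Δ`-continuous. -/
def DeltaContinuousQM (D : FreeGroup α → List (FreeGroup α)) (ψ : FreeGroup α → ℝ) : Prop :=
  IsSymmetricMap ψ ∧ IsQuasimorphism ψ ∧ DeltaContinuousCocycle D (d1 ψ)

/-- `ζ`-type sums: `zetaL A (g₁,…,g_k) g' h = Σ_j A(g_j, g_{j+1}⋯g_k·g', h)`. -/
def zetaL (A : FreeGroup α → FreeGroup α → FreeGroup α → ℝ) :
    List (FreeGroup α) → FreeGroup α → FreeGroup α → ℝ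
  | [], _, _ => 0
  | p :: rest, g', h => A p (rest.prod * g') h + zetaL A rest g' h

/-- `ζ(g,g',h) = Σ_j φ(g_j)·ω(g_{j+1}⋯g_k·g', h)` for `Δ(g) = (g₁,…,g_k)`. -/
def zetaD (D : FreeGroup α → List (FreeGroup α)) (φ : FreeGroup α → ℝ)
    (ω : FreeGroup α → FreeGroup α → ℝ) (g g' h : FreeGroup α) : ℝ :=
  zetaL (fun p u v => φ p * ω u v) (D g) g' h

/-- `w` is a subword of `g` (as reduced words). -/
def Subword (w g : FreeGroup α) : Prop :=
  w.toWord <:+: g.toWord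

/-- `w` is non self-overlapping: there are no reduced words `x, y` with `x` nontrivial
such that `w = xyx` as a reduced word. -/
def NonSelfOverlapping (w : FreeGroup α) : Prop :=
  ¬∃ x y : FreeGroup α, x ≠ 1 ∧ w = x * y * x ∧ ReducedProd [x, y, x]

/-- `ν_w(g)`: the number of occurrences of `w` as a subword of the reduced word `g`. -/
def occCount (w g : FreeGroup α) : ℕ :=
  ((List.range (g.toWord.length + 1)).filter
    (fun s => decide ((g.toWord.drop s).take w.toWord.length = w.toWord))).length

/-- The Brooks counting function `φ_w = ν_w − ν_{w⁻¹}`. -/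
noncomputable def brooksQM (w : FreeGroup α) (g : FreeGroup α) : ℝ :=
  (occCount w g : ℝ) - (occCount w⁻¹ g : ℝ)

/-- `φ` is a Brooks counting quasimorphism on some non self-overlapping word. -/
def IsBrooksQM (φ : FreeGroup α → ℝ) : Prop :=
  ∃ w : FreeGroup α, NonSelfOverlapping w ∧ φ = brooksQM w

/-- The interleaved list `(u₁, w^{ε₁}, u₂, …, u_{k−1}, w^{ε_{k−1}}, u_k)` built from
`us = (u₁,…,u_k)` and signs `eps = (ε₁,…,ε_{k−1})`. -/
def wfacList (w : FreeGroup α) : List (FreeGroup α) → List Bool → List (FreeGroup α)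
  | [], _ => []
  | [u], _ => [u]
  | u :: us, [] => u :: wfacList w us []
  | u :: us, e :: eps => u :: (if e then w else w⁻¹) :: wfacList w us eps

/-- `RolliWord l` : `l = ((n₁,m₁),…,(n_k,m_k))` encodes the normal form
`x_{n₁}^{m₁} ⋯ x_{n_k}^{m_k}` (all `m_j ≠ 0`, no consecutive equal indices). -/
def RolliWord {n : ℕ} (l : List (Fin n × ℤ)) : Prop :=
  (∀ p ∈ l, p.2 ≠ 0) ∧ l.Chain' fun p q => p.1 ≠ q.1

/-- The element `x_{n₁}^{m₁} ⋯ x_{n_k}^{m_k}` encoded by `l`. -/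
def rolliProd {n : ℕ} (l : List (Fin n × ℤ)) : FreeGroup (Fin n) :=
  (l.map fun p => FreeGroup.of p.1 ^ p.2).prod

/-- `φ` is a Rolli quasimorphism. -/
def IsRolliQM {n : ℕ} (φ : FreeGroup (Fin n) → ℝ) : Prop :=
  ∃ lam : Fin n → ℤ → ℝ,
    (∀ j, ∃ B : ℝ, ∀ m : ℤ, |lam j m| ≤ B) ∧
    (∀ j m, lam j (-m) = -lam j m) ∧
    φ 1 = 0 ∧
    ∀ l : List (Fin n × ℤ), RolliWord l → φ (rolliProd l) = (l.map fun p => lam p.1 p.2).sum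

/-- The list of letters (as group elements) of the reduced word representing `g`. -/
def letters (g : FreeGroup α) : List (FreeGroup α) :=
  g.toWord.map fun p => FreeGroup.mk [p]

/-- `d` is the common 2-path of `(g,h)`: `g = t₁⁻¹d` and `h = d⁻¹t₂` as reduced words,
with the tripod condition that `gh = t₁⁻¹t₂` is also reduced. -/
def IsCommon2Path (g h d : FreeGroup α) : Prop :=
  ∃ t₁ t₂ : FreeGroup α, g = t₁⁻¹ * d ∧ h = d⁻¹ * t₂ ∧
    ReducedProd [t₁⁻¹, d] ∧ ReducedProd [d⁻¹, t₂] ∧ ReducedProd [t₁⁻¹, t₂]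

/-- Case (a) of the alignment of `g, h, i` (Figure 4a). -/
def Align3A (g h i : FreeGroup α) : Prop :=
  ∃ t₁ t₂ t₃ t₄ t₅ : FreeGroup α,
    g = t₁ * t₂ ∧ h = t₂⁻¹ * t₃ * t₄ ∧ i = t₄⁻¹ * t₅ ∧
    ReducedProd [t₁, t₂] ∧ ReducedProd [t₂⁻¹, t₃, t₄] ∧ ReducedProd [t₄⁻¹, t₅] ∧
    ReducedProd [t₁, t₃, t₅]

/-- Case (b) of the alignment of `g, h, i` (Figure 4b). -/
def Align3B (g h i : FreeGroup α) : Prop :=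
  ∃ t₁ t₂ t₃ t₄ t₅ : FreeGroup α,
    g = t₁ * t₂ * t₃ ∧ h = t₃⁻¹ * t₄ ∧ i = t₄⁻¹ * t₂⁻¹ * t₅ ∧
    ReducedProd [t₁, t₂, t₃] ∧ ReducedProd [t₃⁻¹, t₄] ∧ ReducedProd [t₄⁻¹, t₂⁻¹, t₅] ∧
    ReducedProd [t₁, t₅]

/-- Case (c) of the alignment of `g, h, i` (Figure 4c), with common 3-path `c`. -/
def Align3C (g h i c : FreeGroup α) : Prop :=
  ∃ t₁ t₂ t₃ t₄ : FreeGroup α,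
    g = t₁⁻¹ * c * t₂ ∧ h = t₂⁻¹ * c⁻¹ * t₃ ∧ i = t₃⁻¹ * c * t₄ ∧
    ReducedProd [t₁⁻¹, c, t₂] ∧ ReducedProd [t₂⁻¹, c⁻¹, t₃] ∧ ReducedProd [t₃⁻¹, c, t₄] ∧
    ReducedProd [t₁⁻¹, t₃] ∧ ReducedProd [t₂⁻¹, t₄]

/-- `c` is the common 3-path of `(g,h,i)`: `c` in case (c), the identity otherwise. -/
def IsCommon3Path (g h i c : FreeGroup α) : Prop :=
  Align3C g h i c ∨ (c = 1 ∧ (Align3A g h i ∨ Align3B g h i))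

end Preamble

/-! Write `Δ(u) = (u₁, …, u_k)`, `Aᵢ = u₁ ⋯ uᵢ` and `Eᵢ = ω(Aᵢ⁻¹v₁⁻¹, v₁uv₂) − ω(Aᵢ⁻¹, u)`. Both
differences are sums `Σⱼ φ(uⱼ) Eᵢ` (with `i = j` resp. `i = k − j`) and `φ` is bounded on pieces,
so it suffices to bound `Σᵢ |Eᵢ|` uniformly.
Since r-parts of `Δ`-triangles have length at most `R`, for a reduced product `x z` the
decomposition `Δ(x z)` keeps all but the last `R` pieces of `Δ(x)` and all but the first `R` pieces
of `Δ(z)`. Hence for `R ≤ i ≤ k − R` we get `Δ(v₁uv₂) = Δ(v₁Aᵢ) · Δ(Aᵢ⁻¹uv₂)`, and the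
`Δ`-triangles of the two pairs in `Eᵢ` have empty r-parts and c-parts agreeing for `N` pieces, with
`N` within `R` of `i` or of `k − i`. So `Δ`-continuity bounds `|Eᵢ|` by `s_N`, and each `s_N`
occurs at most `2(R + 1)` times; the at most `2R` remaining terms are bounded by `2 sup |ω|`. -/

section WordLength

variable {α : Type} [DecidableEq α]

lemma wlen_inv (x : FreeGroup α) : wlen x⁻¹ = wlen x := by
  simp [wlen, FreeGroup.toWord_inv, FreeGroup.invRev_length]

lemma wlen_eq_zero {x : FreeGroup α} : wlen x = 0 ↔ x = 1 := by
  simp [wlen, FreeGroup.toWord_eq_nil_iff]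

lemma wlen_mul_le (x y : FreeGroup α) : wlen (x * y) ≤ wlen x + wlen y := by
  simpa [wlen] using (FreeGroup.toWord_mul_sublist x y).length_le

lemma wlen_prod_le (l : List (FreeGroup α)) : wlen l.prod ≤ (l.map wlen).sum := by
  induction l with
  | nil => simp [wlen]
  | cons a l ih =>
    simp only [List.prod_cons, List.map_cons, List.sum_cons]
    exact (wlen_mul_le a l.prod).trans (by omega)

def ReducedMul (x y : FreeGroup α) : Prop := wlen (x * y) = wlen x + wlen y

lemma ReducedMul.inv {x y : FreeGroup α} (h : ReducedMul x y) : ReducedMul y⁻¹ x⁻¹ := by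
  rw [ReducedMul, ← mul_inv_rev, wlen_inv, wlen_inv, wlen_inv, h, Nat.add_comm]

lemma ReducedMul.left_of_mul_right {x y z : FreeGroup α} (h : ReducedMul x (y * z))
    (hyz : ReducedMul y z) : ReducedMul x y := by
  unfold ReducedMul at *
  rw [← mul_assoc] at h
  have := wlen_mul_le x y
  have := wlen_mul_le (x * y) z
  omega

lemma ReducedMul.right_of_mul_left {x y z : FreeGroup α} (h : ReducedMul (x * y) z)
    (hxy : ReducedMul x y) : ReducedMul y z := by
  unfold ReducedMul at *
  rw [mul_assoc] at h
  have := wlen_mul_le y z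
  have := wlen_mul_le x (y * z)
  omega

lemma ReducedProd.reducedMul_prod_append {l₁ l₂ : List (FreeGroup α)}
    (h : ReducedProd (l₁ ++ l₂)) : ReducedMul l₁.prod l₂.prod := by
  unfold ReducedProd at h
  rw [List.prod_append, List.map_append, List.sum_append] at h
  have := wlen_prod_le l₁
  have := wlen_prod_le l₂
  have := wlen_mul_le l₁.prod l₂.prod
  unfold ReducedMul
  omega

lemma ReducedProd.reducedMul_of_triple {x y z : FreeGroup α} (h : ReducedProd [x, y, z]) :
    ReducedMul x (y * z) ∧ ReducedMul y z := by
  simp only [ReducedProd, List.prod_cons, List.prod_nil, mul_one, List.map_cons, List.map_nil,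
    List.sum_cons, List.sum_nil, add_zero] at h
  have := wlen_mul_le y z
  have := wlen_mul_le x (y * z)
  unfold ReducedMul
  constructor <;> omega

end WordLength

section CommonPrefix

variable {β : Type} [DecidableEq β]

lemma commonPrefix_comm : ∀ l l' : List β, commonPrefix l l' = commonPrefix l' l
  | [], [] | [], _ :: _ | _ :: _, [] => by simp [commonPrefix]
  | a :: as, b :: bs => by
    by_cases h : a = b
    · subst h; simp [commonPrefix, commonPrefix_comm as bs]
    · simp [commonPrefix, h, Ne.symm h]

lemma commonPrefix_prefix_left : ∀ l l' : List β, commonPrefix l l' <+: l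
  | [], _ | _ :: _, [] => by simp [commonPrefix]
  | a :: as, b :: bs => by
    rw [commonPrefix]
    split
    · exact List.cons_prefix_cons.mpr ⟨rfl, commonPrefix_prefix_left as bs⟩
    · exact List.nil_prefix

lemma commonPrefix_prefix_right (l l' : List β) : commonPrefix l l' <+: l' :=
  commonPrefix_comm l l' ▸ commonPrefix_prefix_left l' l

lemma prefix_commonPrefix : ∀ {p l l' : List β}, p <+: l → p <+: l' → p <+: commonPrefix l l'
  | [], _, _, _, _ => List.nil_prefix
  | c :: p, _, _, ⟨r, hr⟩, ⟨r', hr'⟩ => by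
    subst hr hr'
    rw [List.cons_append, List.cons_append, commonPrefix, if_pos rfl]
    exact List.cons_prefix_cons.mpr
      ⟨rfl, prefix_commonPrefix (List.prefix_append p r) (List.prefix_append p r')⟩

lemma commonPrefix_eq_left_of_prefix {l l' : List β} (h : l <+: l') : commonPrefix l l' = l :=
  (commonPrefix_prefix_left l l').eq_of_length
    (le_antisymm (commonPrefix_prefix_left l l').length_le
      (prefix_commonPrefix (List.prefix_refl l) h).length_le)

lemma commonPrefix_eq_right_of_prefix {l l' : List β} (h : l' <+: l) :
    commonPrefix l l' = l' := by
  rw [commonPrefix_comm]; exact commonPrefix_eq_left_of_prefix h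

lemma seqAgree_eq_top_iff {l l' : List β} : seqAgree l l' = ⊤ ↔ l = l' := by
  unfold seqAgree; split_ifs with h <;> simp [h]

lemma length_commonPrefix_of_seqAgree_eq {l l' : List β} {n : ℕ} (h : seqAgree l l' = n) :
    (commonPrefix l l').length = n := by
  unfold seqAgree at h; split_ifs at h <;> simp_all

end CommonPrefix

section SeqInv

variable {α : Type}

@[simp] lemma length_seqInv (l : List (FreeGroup α)) : (seqInv l).length = l.length := by
  simp [seqInv]

@[simp] lemma seqInv_append (l₁ l₂ : List (FreeGroup α)) :
    seqInv (l₁ ++ l₂) = seqInv l₂ ++ seqInv l₁ := by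
  simp [seqInv]

@[simp] lemma seqInv_seqInv (l : List (FreeGroup α)) : seqInv (seqInv l) = l := by
  simp [seqInv, List.map_reverse]

lemma prod_seqInv (l : List (FreeGroup α)) : (seqInv l).prod = l.prod⁻¹ := by
  induction l with
  | nil => simp [seqInv]
  | cons a l ih =>
    rw [show a :: l = [a] ++ l from rfl, seqInv_append, List.prod_append, ih]
    simp [seqInv]

lemma prod_drop_seqInv (l : List (FreeGroup α)) (n : ℕ) :
    ((seqInv l).drop n).prod = (l.take (l.length - n)).prod⁻¹ := by
  rw [seqInv, List.drop_reverse, List.length_map, ← List.map_take, ← seqInv, prod_seqInv]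

end SeqInv

namespace Decomp

variable {α : Type} [DecidableEq α] (dec : Decomp α)

lemma D_eq_seqInv_D_inv (g : FreeGroup α) : dec.D g = seqInv (dec.D g⁻¹) := by
  rw [dec.inv_eq, seqInv_seqInv]

lemma prod_mul_prod_of_D_eq_append {g : FreeGroup α} {l₁ l₂ : List (FreeGroup α)}
    (h : dec.D g = l₁ ++ l₂) : l₁.prod * l₂.prod = g := by
  rw [← List.prod_append, ← h, dec.prod_eq]

lemma reducedMul_of_D_eq_append {g : FreeGroup α} {l₁ l₂ : List (FreeGroup α)}
    (h : dec.D g = l₁ ++ l₂) : ReducedMul l₁.prod l₂.prod :=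
  ReducedProd.reducedMul_prod_append (h ▸ dec.reduced g)

lemma D_prod_left_of_D_eq_append {g : FreeGroup α} {l₁ l₂ : List (FreeGroup α)}
    (h : dec.D g = l₁ ++ l₂) : dec.D l₁.prod = l₁ :=
  dec.infix_closed g [] l₁ l₂ (by simp [h])

lemma D_prod_right_of_D_eq_append {g : FreeGroup α} {l₁ l₂ : List (FreeGroup α)}
    (h : dec.D g = l₁ ++ l₂) : dec.D l₂.prod = l₂ :=
  dec.infix_closed g l₁ l₂ [] (by simp [h])

lemma D_prod_take (g : FreeGroup α) (n : ℕ) : dec.D ((dec.D g).take n).prod = (dec.D g).take n :=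
  dec.D_prod_left_of_D_eq_append (List.take_append_drop n _).symm

lemma D_prod_drop (g : FreeGroup α) (n : ℕ) : dec.D ((dec.D g).drop n).prod = (dec.D g).drop n :=
  dec.D_prod_right_of_D_eq_append (List.take_append_drop n _).symm

lemma D_of_mem {g p : FreeGroup α} (hp : p ∈ dec.D g) : dec.D p = [p] := by
  obtain ⟨l₁, l₂, h⟩ := List.append_of_mem hp
  simpa using dec.infix_closed g l₁ [p] l₂ (by simp [h])

lemma prod_drop_mul_inv (g : FreeGroup α) (n : ℕ) :
    ((dec.D g).drop n).prod * g⁻¹ = ((dec.D g).take n).prod⁻¹ := by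
  have hg := dec.prod_mul_prod_of_D_eq_append (List.take_append_drop n (dec.D g)).symm
  calc ((dec.D g).drop n).prod * g⁻¹
      = ((dec.D g).drop n).prod * (((dec.D g).take n).prod * ((dec.D g).drop n).prod)⁻¹ := by
        rw [hg]
    _ = ((dec.D g).take n).prod⁻¹ := by group

/-- A common first piece of `Δ(x⁻¹)` and `Δ(y)` would cancel in `x y`. -/
lemma commonPrefix_D_inv_eq_nil {x y : FreeGroup α} (h : ReducedMul x y) :
    commonPrefix (dec.D x⁻¹) (dec.D y) = [] := by
  rcases hx : dec.D x⁻¹ with _ | ⟨p, r₁⟩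
  · rfl
  rcases hy : dec.D y with _ | ⟨q, r₂⟩
  · rfl
  rw [commonPrefix, if_neg]
  rintro rfl
  have hp : p ≠ 1 := fun e => dec.one_notin_pieces (e ▸ dec.mem_pieces y p (by simp [hy]))
  have hx' := dec.prod_mul_prod_of_D_eq_append (l₁ := [p]) hx
  have hy' := dec.prod_mul_prod_of_D_eq_append (l₁ := [p]) hy
  have wx := dec.reducedMul_of_D_eq_append (l₁ := [p]) hx
  have wy := dec.reducedMul_of_D_eq_append (l₁ := [p]) hy
  simp only [List.prod_singleton] at hx' hy' wx wy
  have hxy : x * y = r₁.prod⁻¹ * r₂.prod := by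
    rw [← inv_inv x, ← hx', ← hy']; group
  have hle := wlen_mul_le r₁.prod⁻¹ r₂.prod
  rw [wlen_inv] at hle
  have hwx : wlen x = wlen p + wlen r₁.prod := by rw [← wlen_inv, ← hx']; exact wx
  have hwy : wlen y = wlen p + wlen r₂.prod := by rw [← hy']; exact wy
  rw [ReducedMul, hxy] at h
  exact hp (wlen_eq_zero.mp (by omega))

lemma exists_D_eq_commonPrefix_append {x z : FreeGroup α} (h : ReducedMul x z) :
    ∃ r, dec.D x = commonPrefix (dec.D x) (dec.D (x * z)) ++ r ∧ r.length ≤ dec.R :=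
  ⟨rSeq1 dec.D x z, by
    simpa [cSeq1, cSeq2, dec.commonPrefix_D_inv_eq_nil h, seqInv] using dec.triangle₁ x z,
    dec.rBound₁ x z⟩

lemma exists_D_eq_append_suffix {x z : FreeGroup α} (h : ReducedMul x z) :
    ∃ r c, dec.D z = r ++ c ∧ r.length ≤ dec.R ∧ c <:+ dec.D (x * z) := by
  refine ⟨rSeq2 dec.D x z, seqInv (cSeq3 dec.D x z), ?_, dec.rBound₂ x z, ?_⟩
  · simpa [cSeq2, dec.commonPrefix_D_inv_eq_nil h] using dec.triangle₂ x z
  · rw [dec.D_eq_seqInv_D_inv, mul_inv_rev, dec.triangle₃, seqInv_append, seqInv_append]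
    exact (List.suffix_append _ _).trans (List.suffix_append _ _)

lemma seqAgree_D_mul_bounds {x z : FreeGroup α} (h : ReducedMul x z) {n : ℕ}
    (hn : seqAgree (dec.D (x * z)) (dec.D x) = n) :
    n ≤ (dec.D x).length ∧ (dec.D x).length ≤ n + dec.R := by
  have hcp := length_commonPrefix_of_seqAgree_eq hn
  have hle := (commonPrefix_prefix_right (dec.D (x * z)) (dec.D x)).length_le
  obtain ⟨r, hr, hrR⟩ := dec.exists_D_eq_commonPrefix_append h
  have hlen := congrArg List.length hr
  rw [List.length_append, commonPrefix_comm] at hlen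
  omega

lemma D_mul_eq_take_append {y z : FreeGroup α} (h : ReducedMul y z) {i : ℕ}
    (hi : i + dec.R ≤ (dec.D y).length) :
    dec.D (y * z) = (dec.D y).take i ++ dec.D (((dec.D y).drop i).prod * z) := by
  obtain ⟨r, hr, hrR⟩ := dec.exists_D_eq_commonPrefix_append h
  have hlen := congrArg List.length hr
  rw [List.length_append] at hlen
  have hpre : (dec.D y).take i <+: commonPrefix (dec.D y) (dec.D (y * z)) :=
    List.prefix_of_prefix_length_le (List.take_prefix _ _) ⟨r, hr.symm⟩
      (by rw [List.length_take]; omega)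
  obtain ⟨W, hW⟩ := hpre.trans (commonPrefix_prefix_right _ _)
  have hWprod : W.prod = ((dec.D y).drop i).prod * z := by
    have hy := dec.prod_mul_prod_of_D_eq_append (List.take_append_drop i (dec.D y)).symm
    have hyz := dec.prod_mul_prod_of_D_eq_append hW.symm
    exact mul_left_cancel (hyz.trans (by rw [← mul_assoc, hy]))
  rw [← hW, ← hWprod, dec.D_prod_right_of_D_eq_append hW.symm]

lemma D_mul_eq_append_drop {x y : FreeGroup α} (h : ReducedMul x y) {i : ℕ}
    (hRi : dec.R ≤ i) :
    dec.D (x * y) = dec.D (x * ((dec.D y).take i).prod) ++ (dec.D y).drop i := by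
  obtain ⟨r, c, hrc, hrR, hc⟩ := dec.exists_D_eq_append_suffix h
  have hsuf : (dec.D y).drop i <:+ c := by
    rw [hrc, List.drop_append, List.drop_eq_nil_of_le (by omega), List.nil_append]
    exact List.drop_suffix _ _
  obtain ⟨W, hW⟩ := hsuf.trans hc
  have hWprod : W.prod = x * ((dec.D y).take i).prod := by
    have hy := dec.prod_mul_prod_of_D_eq_append (List.take_append_drop i (dec.D y)).symm
    have hxy := dec.prod_mul_prod_of_D_eq_append hW.symm
    exact mul_right_cancel (hxy.trans (by rw [mul_assoc, hy]))
  rw [← hW, ← hWprod, dec.D_prod_left_of_D_eq_append hW.symm]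

section Tripod

variable {x y x' y' : FreeGroup α}

lemma cSeq_of_D_mul_eq_append (hxy : dec.D (x * y) = dec.D x ++ dec.D y) :
    cSeq1 dec.D x⁻¹ (x * y) = [] ∧ cSeq2 dec.D x⁻¹ (x * y) = dec.D x ∧
      cSeq3 dec.D x⁻¹ (x * y) = seqInv (dec.D y) := by
  refine ⟨?_, ?_, ?_⟩
  · simpa [cSeq1] using dec.commonPrefix_D_inv_eq_nil
      (by simpa [dec.prod_eq] using dec.reducedMul_of_D_eq_append hxy)
  · rw [cSeq2, inv_inv, hxy]
    exact commonPrefix_eq_left_of_prefix (List.prefix_append _ _)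
  · rw [cSeq3, inv_inv, show (x * y)⁻¹ * x = y⁻¹ by group, dec.inv_eq, dec.inv_eq, hxy,
      seqInv_append]
    exact commonPrefix_eq_right_of_prefix (List.prefix_append _ _)

lemma rSeq_of_D_mul_eq_append (hxy : dec.D (x * y) = dec.D x ++ dec.D y) :
    rSeq1 dec.D x⁻¹ (x * y) = [] ∧ rSeq2 dec.D x⁻¹ (x * y) = [] ∧
      rSeq3 dec.D x⁻¹ (x * y) = [] := by
  obtain ⟨h₁, h₂, h₃⟩ := dec.cSeq_of_D_mul_eq_append hxy
  refine ⟨?_, ?_, ?_⟩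
  · simp [rSeq1, h₁, h₂, dec.inv_eq]
  · simp [rSeq2, h₂, h₃, hxy]
  · simp [rSeq3, h₁, h₃, dec.inv_eq]

lemma NDelta_of_D_mul_eq_append (hxy : dec.D (x * y) = dec.D x ++ dec.D y)
    (hxy' : dec.D (x' * y') = dec.D x' ++ dec.D y')
    (hne : ((x⁻¹, x * y) : FreeGroup α × FreeGroup α) ≠ (x'⁻¹, x' * y')) :
    NDelta dec.D (x⁻¹, x * y) (x'⁻¹, x' * y') =
      min (seqAgree (dec.D x⁻¹) (dec.D x'⁻¹)) (seqAgree (dec.D y) (dec.D y')) := by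
  obtain ⟨c₁, c₂, c₃⟩ := dec.cSeq_of_D_mul_eq_append hxy
  obtain ⟨c₁', c₂', c₃'⟩ := dec.cSeq_of_D_mul_eq_append hxy'
  obtain ⟨r₁, r₂, r₃⟩ := dec.rSeq_of_D_mul_eq_append hxy
  obtain ⟨r₁', r₂', r₃'⟩ := dec.rSeq_of_D_mul_eq_append hxy'
  rw [NDelta, if_neg hne, if_pos ⟨by rw [r₁, r₁'], by rw [r₂, r₂'], by rw [r₃, r₃']⟩]
  simp [c₁, c₂, c₃, c₁', c₂', c₃', seqAgree, ← dec.inv_eq]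

lemma NDelta_ne_top_of_D_mul_eq_append (hxy : dec.D (x * y) = dec.D x ++ dec.D y)
    (hxy' : dec.D (x' * y') = dec.D x' ++ dec.D y')
    (hne : ((x⁻¹, x * y) : FreeGroup α × FreeGroup α) ≠ (x'⁻¹, x' * y')) :
    NDelta dec.D (x⁻¹, x * y) (x'⁻¹, x' * y') ≠ ⊤ := by
  rw [dec.NDelta_of_D_mul_eq_append hxy hxy' hne, Ne, min_eq_top, seqAgree_eq_top_iff,
    seqAgree_eq_top_iff]
  rintro ⟨hx, hy⟩
  have hx := congrArg List.prod hx
  have hy := congrArg List.prod hy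
  rw [dec.prod_eq, dec.prod_eq] at hx hy
  rw [inv_inj] at hx
  exact hne (by rw [hx, hy])

end Tripod

section Window

variable {u v₁ v₂ : FreeGroup α} {i : ℕ}

lemma D_mul_mul_eq_append (hv : ReducedMul v₁ (u * v₂)) (hu : ReducedMul u v₂)
    (hRi : dec.R ≤ i) (hik : i + dec.R ≤ (dec.D u).length) :
    dec.D (v₁ * u * v₂) =
      dec.D (v₁ * ((dec.D u).take i).prod) ++ dec.D (((dec.D u).drop i).prod * v₂) := by
  have huv := dec.D_mul_eq_take_append hu hik
  have hlen : ((dec.D u).take i).length = i := by rw [List.length_take]; omega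
  rw [mul_assoc, dec.D_mul_eq_append_drop hv hRi, huv, List.take_left' hlen,
    List.drop_left' hlen]

lemma exists_NDelta_eq (hv : ReducedMul v₁ (u * v₂)) (hu : ReducedMul u v₂)
    (hRi : dec.R ≤ i) (hik : i + dec.R ≤ (dec.D u).length)
    (hne : ((((dec.D u).take i).prod⁻¹ * v₁⁻¹, v₁ * u * v₂) : FreeGroup α × FreeGroup α) ≠
      (((dec.D u).take i).prod⁻¹, u)) :
    ∃ N : ℕ, NDelta dec.D (((dec.D u).take i).prod⁻¹ * v₁⁻¹, v₁ * u * v₂)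
        (((dec.D u).take i).prod⁻¹, u) = N ∧
      (N ≤ i ∧ i ≤ N + dec.R ∨
        N ≤ (dec.D u).length - i ∧ (dec.D u).length - i ≤ N + dec.R) := by
  have hp := dec.D_mul_mul_eq_append hv hu hRi hik
  have hsplit := (List.take_append_drop i (dec.D u)).symm
  have hAS := dec.prod_mul_prod_of_D_eq_append hsplit
  set A := ((dec.D u).take i).prod
  set S := ((dec.D u).drop i).prod
  have hq : dec.D (A * S) = dec.D A ++ dec.D S := by
    rw [hAS, dec.D_prod_take, dec.D_prod_drop, ← hsplit]
  have hp' : dec.D ((v₁ * A) * (S * v₂)) = dec.D (v₁ * A) ++ dec.D (S * v₂) := by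
    rwa [show (v₁ * A) * (S * v₂) = v₁ * (A * S) * v₂ by group, hAS]
  have hpq : (((A⁻¹ * v₁⁻¹, v₁ * u * v₂) : FreeGroup α × FreeGroup α), (A⁻¹, u)) =
      (((v₁ * A)⁻¹, (v₁ * A) * (S * v₂)), (A⁻¹, A * S)) := by
    rw [← hAS]; simp only [mul_inv_rev, mul_assoc]
  rw [Prod.mk.injEq] at hpq
  rw [hpq.1, hpq.2] at hne ⊢
  obtain ⟨N, hN⟩ := ENat.ne_top_iff_exists.mp (dec.NDelta_ne_top_of_D_mul_eq_append hp' hq hne)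
  refine ⟨N, hN.symm, ?_⟩
  rw [dec.NDelta_of_D_mul_eq_append hp' hq hne] at hN
  have hAv : ReducedMul A (S * v₂) := by
    simpa [dec.prod_eq] using dec.reducedMul_of_D_eq_append (dec.D_mul_eq_take_append hu hik)
  rcases min_choice (seqAgree (dec.D (v₁ * A)⁻¹) (dec.D A⁻¹)) (seqAgree (dec.D (S * v₂)) (dec.D S))
    with h | h <;> rw [h] at hN
  · have hvA : ReducedMul v₁ A := (show ReducedMul v₁ (A * (S * v₂)) by
      rwa [← mul_assoc, hAS]).left_of_mul_right hAv
    rw [mul_inv_rev] at hN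
    have := dec.seqAgree_D_mul_bounds hvA.inv hN.symm
    rw [dec.inv_eq, length_seqInv, dec.D_prod_take, List.length_take] at this
    left; omega
  · have hSv : ReducedMul S v₂ := (show ReducedMul (A * S) v₂ by rwa [hAS]).right_of_mul_left
      (by simpa [dec.prod_eq] using dec.reducedMul_of_D_eq_append hsplit)
    have := dec.seqAgree_D_mul_bounds hSv hN.symm
    rw [dec.D_prod_drop, List.length_drop] at this
    right; omega

end Window

end Decomp

section WindowSums

open Finset

variable {s : ℕ → ℝ}

lemma sum_comp_le_tsum_of_injOn {ι : Type*} (hs0 : ∀ n, 0 ≤ s n) (hs : Summable s)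
    {F : Finset ι} {f : ι → ℕ} (hf : Set.InjOn f F) : ∑ i ∈ F, s (f i) ≤ ∑' n, s n := by
  classical
  rw [← sum_image hf]
  exact hs.sum_le_tsum _ fun n _ => hs0 n

/-- Each `s n` is counted at most `2 (R + 1)` times on the left. -/
lemma sum_le_tsum_of_window {R k : ℕ} (hs0 : ∀ n, 0 ≤ s n) (hs : Summable s)
    {M : Finset ℕ} (hM : ∀ i ∈ M, R ≤ i ∧ i + R ≤ k) {N : ℕ → ℕ}
    (hN : ∀ i ∈ M, N i ≤ i ∧ i ≤ N i + R ∨ N i ≤ k - i ∧ k - i ≤ N i + R) :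
    ∑ i ∈ M, s (N i) ≤ 2 * (R + 1) * ∑' n, s n := by
  have hpt : ∀ i ∈ M, s (N i) ≤ ∑ d ∈ range (R + 1), (s (i - d) + s (k - i - d)) := by
    intro i hi
    have hterm : ∀ d ∈ range (R + 1), 0 ≤ s (i - d) + s (k - i - d) :=
      fun d _ => add_nonneg (hs0 _) (hs0 _)
    rcases hN i hi with ⟨h₁, h₂⟩ | ⟨h₁, h₂⟩
    · refine le_trans ?_ (single_le_sum hterm (mem_range.mpr (by omega : i - N i < R + 1)))
      rw [Nat.sub_sub_self h₁]
      exact le_add_of_nonneg_right (hs0 _)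
    · refine le_trans ?_ (single_le_sum hterm (mem_range.mpr (by omega : k - i - N i < R + 1)))
      rw [Nat.sub_sub_self h₁]
      exact le_add_of_nonneg_left (hs0 _)
  calc ∑ i ∈ M, s (N i)
      ≤ ∑ i ∈ M, ∑ d ∈ range (R + 1), (s (i - d) + s (k - i - d)) := sum_le_sum hpt
    _ = ∑ d ∈ range (R + 1), (∑ i ∈ M, s (i - d) + ∑ i ∈ M, s (k - i - d)) := by
        rw [sum_comm]; simp only [sum_add_distrib]
    _ ≤ ∑ d ∈ range (R + 1), (∑' n, s n + ∑' n, s n) := by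
        refine sum_le_sum fun d hd => add_le_add ?_ ?_ <;>
          refine sum_comp_le_tsum_of_injOn hs0 hs fun a ha b hb hab => ?_
        all_goals
          have := hM a ha; have := hM b hb; simp only [mem_range] at hd hab; omega
    _ = 2 * (R + 1) * ∑' n, s n := by
        rw [sum_const, card_range, nsmul_eq_mul]; push_cast; ring

lemma card_filter_not_window_le (R k : ℕ) :
    ((range (k + 1)).filter fun i => ¬(R ≤ i ∧ i + R ≤ k)).card ≤ 2 * R := by
  have hsub : ((range (k + 1)).filter fun i => ¬(R ≤ i ∧ i + R ≤ k)) ⊆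
      range R ∪ Ico (k + 1 - R) (k + 1) := by
    intro i hi
    simp only [mem_filter, mem_range] at hi
    simp only [mem_union, mem_range, mem_Ico]
    omega
  refine (card_le_card hsub).trans ((card_union_le _ _).trans ?_)
  simp only [card_range, Nat.card_Ico]
  omega

lemma sum_abs_le_of_window {R k : ℕ} {C : ℝ} (hs0 : ∀ n, 0 ≤ s n) (hs : Summable s)
    {E : ℕ → ℝ} (hC : ∀ i, |E i| ≤ C)
    (hmid : ∀ i, R ≤ i → i + R ≤ k → ∃ N, |E i| ≤ s N ∧
      (N ≤ i ∧ i ≤ N + R ∨ N ≤ k - i ∧ k - i ≤ N + R)) :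
    ∑ i ∈ range (k + 1), |E i| ≤ 2 * R * C + 2 * (R + 1) * ∑' n, s n := by
  classical
  rw [← sum_filter_not_add_sum_filter (range (k + 1)) fun i => R ≤ i ∧ i + R ≤ k]
  refine add_le_add ?_ ?_
  · refine (sum_le_card_nsmul _ _ C fun i _ => hC i).trans ?_
    rw [nsmul_eq_mul]
    exact mul_le_mul_of_nonneg_right (by exact_mod_cast card_filter_not_window_le R k)
      ((abs_nonneg _).trans (hC 0))
  · have hM : ∀ i ∈ (range (k + 1)).filter (fun i => R ≤ i ∧ i + R ≤ k), R ≤ i ∧ i + R ≤ k :=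
      fun i hi => (mem_filter.mp hi).2
    choose! N hEN hN using fun i hi => hmid i (hM i hi).1 (hM i hi).2
    exact (sum_le_sum hEN).trans (sum_le_tsum_of_window hs0 hs hM hN)

end WindowSums

section ZetaL

variable {α : Type}

lemma abs_zetaL_sub_le (φ : FreeGroup α → ℝ) (ω : FreeGroup α → FreeGroup α → ℝ) {B : ℝ}
    (l : List (FreeGroup α)) (hB : ∀ p ∈ l, |φ p| ≤ B) (g₁ h₁ g₂ h₂ : FreeGroup α) :
    |zetaL (fun p g h => φ p * ω g h) l g₁ h₁ - zetaL (fun p g h => φ p * ω g h) l g₂ h₂| ≤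
      B * ∑ j ∈ Finset.range l.length,
        |ω ((l.drop (j + 1)).prod * g₁) h₁ - ω ((l.drop (j + 1)).prod * g₂) h₂| := by
  induction l with
  | nil => simp [zetaL]
  | cons p l ih =>
    have hp := hB p List.mem_cons_self
    have ih := ih fun q hq => hB q (List.mem_cons_of_mem p hq)
    simp only [zetaL, List.length_cons, Finset.sum_range_succ', List.drop_succ_cons,
      List.drop_zero, mul_add]
    set z₁ := zetaL (fun p g h => φ p * ω g h) l g₁ h₁
    set z₂ := zetaL (fun p g h => φ p * ω g h) l g₂ h₂
    calc _ = |φ p * (ω (l.prod * g₁) h₁ - ω (l.prod * g₂) h₂) + (z₁ - z₂)| := by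
          congr 1; ring
      _ ≤ |φ p| * |ω (l.prod * g₁) h₁ - ω (l.prod * g₂) h₂| + _ :=
          (abs_add_le _ _).trans_eq (by rw [abs_mul])
      _ ≤ _ := by
        rw [add_comm]
        exact add_le_add ih (mul_le_mul_of_nonneg_right hp (abs_nonneg _))

end ZetaL

section Zeta

variable {α : Type} [DecidableEq α]

/-- The `i`-th summand of `ζ(u, u⁻¹v₁⁻¹, v₁uv₂) − ζ(u, u⁻¹, u)`, without its factor `φ(u_i)`. -/
def cocycleGap (D : FreeGroup α → List (FreeGroup α)) (ω : FreeGroup α → FreeGroup α → ℝ)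
    (u v₁ v₂ : FreeGroup α) (i : ℕ) : ℝ :=
  ω (((D u).take i).prod⁻¹ * v₁⁻¹) (v₁ * u * v₂) - ω ((D u).take i).prod⁻¹ u

namespace Decomp

variable (dec : Decomp α) {φ : FreeGroup α → ℝ} {B : ℝ}

lemma abs_zetaD_sub_le_left (ω : FreeGroup α → FreeGroup α → ℝ) {u : FreeGroup α}
    (hB0 : 0 ≤ B) (hB : ∀ p ∈ dec.D u, |φ p| ≤ B) (v₁ v₂ : FreeGroup α) :
    |zetaD dec.D φ ω u (u⁻¹ * v₁⁻¹) (v₁ * u * v₂) - zetaD dec.D φ ω u u⁻¹ u| ≤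
      B * ∑ i ∈ Finset.range ((dec.D u).length + 1), |cocycleGap dec.D ω u v₁ v₂ i| := by
  refine (abs_zetaL_sub_le φ ω _ hB _ _ _ _).trans (mul_le_mul_of_nonneg_left ?_ hB0)
  rw [Finset.sum_range_succ']
  refine le_add_of_le_of_nonneg (Finset.sum_le_sum fun j _ => le_of_eq ?_) (abs_nonneg _)
  rw [cocycleGap, ← mul_assoc, dec.prod_drop_mul_inv]

lemma abs_zetaD_sub_le_right (ω : FreeGroup α → FreeGroup α → ℝ) {u : FreeGroup α}
    (hB0 : 0 ≤ B) (hB : ∀ p ∈ dec.D u⁻¹, |φ p| ≤ B) (v₁ v₂ : FreeGroup α) :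
    |zetaD dec.D φ ω u⁻¹ v₁⁻¹ (v₁ * u * v₂) - zetaD dec.D φ ω u⁻¹ 1 u| ≤
      B * ∑ i ∈ Finset.range ((dec.D u).length + 1), |cocycleGap dec.D ω u v₁ v₂ i| := by
  refine (abs_zetaL_sub_le φ ω _ hB _ _ _ _).trans (mul_le_mul_of_nonneg_left ?_ hB0)
  rw [Finset.sum_range_succ, dec.inv_eq, length_seqInv]
  refine le_add_of_le_of_nonneg ((Finset.sum_congr rfl fun j _ => ?_).trans_le
    (Finset.sum_range_reflect (fun i => |cocycleGap dec.D ω u v₁ v₂ i|) _).le) (abs_nonneg _)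
  rw [prod_drop_seqInv, cocycleGap, mul_one, Nat.sub_sub, Nat.add_comm 1 j]

lemma exists_sum_abs_cocycleGap_le {ω : FreeGroup α → FreeGroup α → ℝ}
    (hωbd : ∃ C : ℝ, ∀ g h, |ω g h| ≤ C) (hωc : DeltaContinuousCocycle dec.D ω) :
    ∃ K ≥ (0 : ℝ), ∀ u v₁ v₂ : FreeGroup α, ReducedProd [v₁, u, v₂] →
      ∑ i ∈ Finset.range ((dec.D u).length + 1), |cocycleGap dec.D ω u v₁ v₂ i| ≤ K := by
  obtain ⟨C, hC⟩ := hωbd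
  obtain ⟨s, hs0, hs, hcont⟩ := hωc
  have hC0 : 0 ≤ C := (abs_nonneg _).trans (hC 1 1)
  have hs0' : 0 ≤ ∑' n, s n := tsum_nonneg hs0
  refine ⟨2 * dec.R * (2 * C) + 2 * (dec.R + 1) * ∑' n, s n, by positivity,
    fun u v₁ v₂ hred => ?_⟩
  obtain ⟨hv, hu⟩ := hred.reducedMul_of_triple
  refine sum_abs_le_of_window hs0 hs (fun i => ?_) fun i hRi hik => ?_
  · exact ((abs_sub _ _).trans (add_le_add (hC _ _) (hC _ _))).trans_eq (two_mul C).symm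
  · by_cases hpq : ((((dec.D u).take i).prod⁻¹ * v₁⁻¹, v₁ * u * v₂) : FreeGroup α × FreeGroup α) =
        (((dec.D u).take i).prod⁻¹, u)
    · refine ⟨i, ?_, Or.inl ⟨le_rfl, by omega⟩⟩
      rw [Prod.mk.injEq] at hpq
      simp [cocycleGap, hpq.1, hpq.2, hs0]
    · obtain ⟨N, hN, hwin⟩ := dec.exists_NDelta_eq hv hu hRi hik hpq
      exact ⟨N, hcont _ _ hpq N hN, hwin⟩

end Decomp

lemma IsDecomposable.exists_abs_le {dec : Decomp α} {φ : FreeGroup α → ℝ}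
    (hφ : IsDecomposable dec φ) : ∃ B ≥ (0 : ℝ), ∀ g, ∀ p ∈ dec.D g, |φ p| ≤ B := by
  obtain ⟨lam, ⟨B, hB⟩, -, rfl⟩ := hφ
  refine ⟨max B 0, le_max_right _ _, fun g p hp => ?_⟩
  rw [decQM, dec.D_of_mem hp, List.map_singleton, List.sum_singleton]
  exact (hB p (dec.mem_pieces g p hp)).trans (le_max_left _ _)

end Zeta

theorem zeta_continuity_bounded_general {α : Type} [DecidableEq α]
    (dec : Decomp α)
    (φ : FreeGroup α → ℝ) (ω : FreeGroup α → FreeGroup α → ℝ)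
    (hφ : IsDecomposable dec φ)
    (hωbd : ∃ C : ℝ, ∀ g h, |ω g h| ≤ C)
    (hωc : DeltaContinuousCocycle dec.D ω) :
    ∃ C > (0 : ℝ), ∀ u v₁ v₂ : FreeGroup α, ReducedProd [v₁, u, v₂] →
      |zetaD dec.D φ ω u (u⁻¹ * v₁⁻¹) (v₁ * u * v₂) - zetaD dec.D φ ω u u⁻¹ u| ≤ C ∧
      |zetaD dec.D φ ω u⁻¹ v₁⁻¹ (v₁ * u * v₂) - zetaD dec.D φ ω u⁻¹ 1 u| ≤ C := by
  obtain ⟨B, hB0, hB⟩ := hφ.exists_abs_le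
  obtain ⟨K, hK0, hK⟩ := dec.exists_sum_abs_cocycleGap_le hωbd hωc
  refine ⟨B * K + 1, by positivity, fun u v₁ v₂ hred => ?_⟩
  have hgap := mul_le_mul_of_nonneg_left (hK u v₁ v₂ hred) hB0
  exact ⟨(dec.abs_zetaD_sub_le_left ω hB0 (hB u) v₁ v₂).trans (by linarith),
    (dec.abs_zetaD_sub_le_right ω hB0 (hB u⁻¹) v₁ v₂).trans (by linarith)⟩

/-- Proposition 4.3 (3): if `v₁uv₂` is reduced then both
`ζ(u, u⁻¹v₁⁻¹, v₁uv₂) − ζ(u, u⁻¹, u)` and `ζ(u⁻¹, v₁⁻¹, v₁uv₂) − ζ(u⁻¹, 1, u)` are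
uniformly bounded. -/
theorem zeta_continuity_bounded {α : Type} [Fintype α] [DecidableEq α]
    (hab : ∃ a b : α, a ≠ b) (dec : Decomp α)
    (φ : FreeGroup α → ℝ) (ω : FreeGroup α → FreeGroup α → ℝ)
    (hφ : IsDecomposable dec φ)
    (hω : ∃ ψ : FreeGroup α → ℝ, IsSymmetricMap ψ ∧ IsQuasimorphism ψ ∧
      ω = fun g h => d1 ψ g h)
    (hωbd : ∃ C : ℝ, ∀ g h, |ω g h| ≤ C)
    (hωc : DeltaContinuousCocycle dec.D ω) :
    ∃ C > (0 : ℝ), ∀ u v₁ v₂ : FreeGroup α, ReducedProd [v₁, u, v₂] →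
      |zetaD dec.D φ ω u (u⁻¹ * v₁⁻¹) (v₁ * u * v₂) - zetaD dec.D φ ω u u⁻¹ u| ≤ C ∧
      |zetaD dec.D φ ω u⁻¹ v₁⁻¹ (v₁ * u * v₂) - zetaD dec.D φ ω u⁻¹ 1 u| ≤ C :=
  zeta_continuity_bounded_general dec φ ω hφ hωbd hωc
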